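/- arXiv:1512.06393 — 5 statements merged into one kernel-verified Lean document; each statement's English description precedes it below -/
import Mathlib

section
/- Let G be a graph with clique number 4 whose odd cycle lengths are exactly {3, k} with k = 3+2l, l ≥ 2, and let X be a K₄ in G. Then for distinct vertices x, y of X there is no path of even length in G from x to y internally disjoint from X. -/
open SimpleGraph

/-- The set of lengths of odd cycles of `G`. -/
def oddCycleLengths {V : Type*} (G : SimpleGraph V) : Set ℕ :=
  {n | Odd n ∧ ∃ (u : V) (w : G.Walk u u), w.IsCycle ∧ w.length = n}

/-- The clique number `ω(G)`. -/
noncomputable def cliqueNumber {V : Type*} (G : SimpleGraph V) : ℕ :=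
  sSup {n | ∃ s : Finset V, G.IsNClique n s}

private lemma edge_notMem_aux {V : Type*} {G : SimpleGraph V} {x y : V}
    (p : G.Walk x y) (hp : p.IsPath) (hev : Even p.length) (hxy : x ≠ y) :
    s(x, y) ∉ p.edges := by
  intro he
  cases p with
  | nil => exact hxy rfl
  | @cons _ w _ h q =>
    rw [SimpleGraph.Walk.edges_cons, List.mem_cons] at he
    rw [SimpleGraph.Walk.cons_isPath_iff] at hp
    rcases he with he | he
    · rw [Sym2.eq_iff] at he
      rcases he with ⟨-, hyw⟩ | ⟨-, hyx⟩
      · subst hyw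
        -- q : G.Walk y y is a path, so q = nil, so the total length is 1, not even
        have : q.length = 0 := by
          by_contra h0
          have hynil : ¬ q.Nil := by
            intro hn
            exact h0 (SimpleGraph.Walk.nil_iff_length_eq.mp hn)
          -- y appears at head and end of q.support
          cases q with
          | nil => exact h0 rfl
          | @cons _ z _ h' q' =>
            rw [SimpleGraph.Walk.cons_isPath_iff] at hp
            exact hp.1.2 (q'.end_mem_support)
        rw [SimpleGraph.Walk.length_cons, this] at hev
        simp at hev
      · exact hxy hyx.symm
    · exact hp.2 (q.fst_mem_support_of_mem_edges he)

theorem stmt2 {V : Type*} [Fintype V] [DecidableEq V] (G : SimpleGraph V) (l : ℕ)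
    (hl : 2 ≤ l)
    (homega : cliqueNumber G = 4)
    (hL : oddCycleLengths G = {3, 3 + 2 * l})
    (X : Finset V) (hX : G.IsNClique 4 X)
    (x y : V) (hx : x ∈ X) (hy : y ∈ X) (hxy : x ≠ y) :
    ¬ ∃ p : G.Walk x y, p.IsPath ∧ Even p.length ∧
        ∀ z ∈ p.support, z ≠ x → z ≠ y → z ∉ X := by
  rintro ⟨p, hp, hev, hint⟩
  have hclique := hX.1
  have hadj : ∀ u ∈ X, ∀ v ∈ X, u ≠ v → G.Adj u v := fun u hu v hv huv =>
    hclique hu hv huv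
  -- extract the two other vertices a b of X
  have hsub : {x, y} ⊆ X := by
    intro z hz
    simp only [Finset.mem_insert, Finset.mem_singleton] at hz
    rcases hz with rfl | rfl <;> assumption
  have hcard2 : (X \ {x, y}).card = 2 := by
    rw [Finset.card_sdiff_of_subset hsub, hX.2, Finset.card_insert_of_notMem (by simpa using hxy),
      Finset.card_singleton]
  have h12 : 1 < (X \ {x, y}).card := by omega
  obtain ⟨a, ha, b, hb, hab⟩ := Finset.one_lt_card.mp h12
  simp only [Finset.mem_sdiff, Finset.mem_insert, Finset.mem_singleton, not_or] at ha hb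
  obtain ⟨haX, hax, hay⟩ := ha
  obtain ⟨hbX, hbx, hby⟩ := hb
  have hap : a ∉ p.support := fun h => hint a h hax hay haX
  have hbp : b ∉ p.support := fun h => hint b h hbx hby hbX
  -- the cycle c1 = x - (p.reverse from y back to x, reversed) with the edge x-y
  have hxyadj : G.Adj x y := hadj x hx y hy hxy
  have hedge : s(x, y) ∉ p.edges := edge_notMem_aux p hp hev hxy
  let c1 : G.Walk x x := SimpleGraph.Walk.cons hxyadj p.reverse
  have hc1 : c1.IsCycle := by
    rw [SimpleGraph.Walk.cons_isCycle_iff]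
    refine ⟨hp.reverse, ?_⟩
    rw [SimpleGraph.Walk.edges_reverse, List.mem_reverse]
    exact hedge
  have hc1len : c1.length = p.length + 1 := by
    simp [c1, SimpleGraph.Walk.length_cons, SimpleGraph.Walk.length_reverse]
  have h1 : (p.length + 1) ∈ oddCycleLengths G :=
    ⟨hev.add_one, x, c1, hc1, hc1len⟩
  -- the cycle c2 = x - b - a - y - (p reversed back to x)
  have harev : a ∉ p.reverse.support := by
    rw [SimpleGraph.Walk.support_reverse, List.mem_reverse]; exact hap
  have hbrev : b ∉ p.reverse.support := by
    rw [SimpleGraph.Walk.support_reverse, List.mem_reverse]; exact hbp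
  let q1 : G.Walk a x := SimpleGraph.Walk.cons (hadj a haX y hy hay) p.reverse
  let q2 : G.Walk b x := SimpleGraph.Walk.cons (hadj b hbX a haX (Ne.symm hab)) q1
  let c2 : G.Walk x x := SimpleGraph.Walk.cons (hadj x hx b hbX (Ne.symm hbx)) q2
  have hq1 : q1.IsPath := by
    rw [SimpleGraph.Walk.cons_isPath_iff]
    exact ⟨hp.reverse, harev⟩
  have hq2 : q2.IsPath := by
    rw [SimpleGraph.Walk.cons_isPath_iff]
    refine ⟨hq1, ?_⟩
    simp only [q1, SimpleGraph.Walk.support_cons, List.mem_cons, not_or]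
    exact ⟨Ne.symm hab, hbrev⟩
  have hc2 : c2.IsCycle := by
    rw [SimpleGraph.Walk.cons_isCycle_iff]
    refine ⟨hq2, ?_⟩
    simp only [q2, q1, SimpleGraph.Walk.edges_cons, List.mem_cons, not_or]
    refine ⟨?_, ?_, ?_⟩
    · rw [Sym2.eq_iff]
      rintro (⟨h1, h2⟩ | ⟨h1, h2⟩) <;> simp_all
    · rw [Sym2.eq_iff]
      rintro (⟨h1, h2⟩ | ⟨h1, h2⟩) <;> simp_all
    · intro h
      rw [SimpleGraph.Walk.edges_reverse, List.mem_reverse] at h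
      exact hbp (p.snd_mem_support_of_mem_edges h)
  have hc2len : c2.length = p.length + 3 := by
    simp [c2, q2, q1, SimpleGraph.Walk.length_cons, SimpleGraph.Walk.length_reverse]
  have h3 : (p.length + 3) ∈ oddCycleLengths G := by
    refine ⟨?_, x, c2, hc2, hc2len⟩
    obtain ⟨m, hm⟩ := hev
    exact ⟨m + 1, by omega⟩
  rw [hL] at h1 h3
  simp only [Set.mem_insert_iff, Set.mem_singleton_iff] at h1 h3
  have h0 : p.length ≠ 0 := fun h => hxy (SimpleGraph.Walk.eq_of_length_eq_zero h)
  omega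
end

section
/- Let G be a K₄-free 4-critical graph with L(G) = {3, k}, k = 3+2l, l ≥ 2, and let C be a k-cycle in G with at least two diagonals (chords). Then the induced subgraph on V(C) consists of C together with exactly two chords, and these two chords are of the form v₀v₂ and v₁v₃ for consecutive vertices v₀, v₁, v₂, v₃ of C. -/
open SimpleGraph

/-- `G` is 4-critical. -/
def IsFourCritical {V : Type*} (G : SimpleGraph V) : Prop :=
  G.chromaticNumber = 4 ∧ ∀ H : SimpleGraph V, H < G → H.chromaticNumber ≤ 3

/-- A chord (diagonal) of the cycle `f : ZMod n → V`: an edge of `G` between two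
non-consecutive vertices of the cycle. -/
def IsChord {V : Type*} {n : ℕ} (G : SimpleGraph V) (f : ZMod n → V) (a b : ZMod n) : Prop :=
  G.Adj (f a) (f b) ∧ b ≠ a + 1 ∧ a ≠ b + 1

/-! A chord joining two vertices at distance `d` along `C` closes two cycles with `C`, of lengths
`d + 1` and `k - d + 1`. One of them is odd and shorter than `k`, hence a triangle: every chord
joins two vertices at distance 2. If `v_p v_{p+2}` and `v_q v_{q+2}` are chords with
`q - p ∉ {0, ±1}`, shortcutting `C` along both gives an odd cycle of length `k - 2`, which is neither
`3` (as `k ≥ 7`) nor `k`. So the starting positions of chords are pairwise adjacent on `C`, which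
leaves room for exactly two chords, at `p` and `p + 1`. -/

namespace ZMod

theorem exists_eq_add_natCast {n : ℕ} [NeZero n] {a b : ZMod n} (h₀ : b ≠ a)
    (h₁ : b ≠ a + 1) (h₂ : a ≠ b + 1) : ∃ d : ℕ, 2 ≤ d ∧ d + 2 ≤ n ∧ b = a + d := by
  have hb : b = a + (b - a).val := by rw [natCast_zmod_val]; ring
  refine ⟨(b - a).val, ?_, ?_, hb⟩
  · by_contra! hlt
    interval_cases h : (b - a).val
    · exact h₀ (by simpa using hb)
    · exact h₁ (by simpa using hb)
  · by_contra! hgt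
    have hwrap : (b - a).val + 1 = n := by have := (b - a).val_lt; omega
    apply h₂
    rw [hb, add_assoc, ← Nat.cast_add_one, hwrap, natCast_self, add_zero]

theorem add_natCast_ne_self {n k : ℕ} (hk : 0 < k) (hkn : k < n) (a : ZMod n) :
    a + k ≠ a := by
  rw [Ne, add_eq_left, natCast_eq_zero_iff]
  exact fun h => (Nat.le_of_dvd hk h).not_gt hkn

theorem eq_or_eq_add_one_of_near {n : ℕ} (hn : 4 ≤ n) {i r : ZMod n}
    (h₁ : r = i ∨ r = i + 1 ∨ i = r + 1) (h₂ : r = i + 1 ∨ r = i + 1 + 1 ∨ i + 1 = r + 1) :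
    r = i ∨ r = i + 1 := by
  rcases h₁ with h | h | rfl
  · exact .inl h
  · exact .inr h
  · have ne_self (k : ℕ) (hk : 0 < k) (hk3 : k ≤ 3) : r + k ≠ r :=
      add_natCast_ne_self hk (by omega) r
    exfalso
    rcases h₂ with h | h | h
    · exact ne_self 2 two_pos (by norm_num) (by push_cast; linear_combination h.symm)
    · exact ne_self 3 three_pos le_rfl (by push_cast; linear_combination h.symm)
    · exact ne_self 1 one_pos (by norm_num) (by push_cast; linear_combination h)

end ZMod

namespace SimpleGraph

variable {V : Type*} {G : SimpleGraph V} {n : ℕ}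

structure IsCyclicSeq (G : SimpleGraph V) (f : ZMod n → V) : Prop where
  injective : Function.Injective f
  adj_add_one : ∀ i, G.Adj (f i) (f (i + 1))

def cycleArc (f : ZMod n → V) (a : ZMod n) (d : ℕ) : ZMod (d + 1) → V :=
  fun i => f (a + i.val)

theorem cycleArc_natCast (f : ZMod n → V) (a : ZMod n) {d k : ℕ} (hk : k ≤ d) :
    cycleArc f a d k = f (a + k) := by
  rw [cycleArc, ZMod.val_natCast_of_lt (by omega)]

namespace IsCyclicSeq

variable {f : ZMod n → V}

theorem exists_isCycle (hf : G.IsCyclicSeq f) (hn : 3 ≤ n) :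
    ∃ (u : V) (w : G.Walk u u), w.IsCycle ∧ w.length = n := by
  obtain ⟨k, rfl⟩ : ∃ k, n = k + 2 := ⟨n - 2, by omega⟩
  refine (cycleGraph_isContained_iff (by omega)).mp ⟨⟨⟨f, fun {u v} huv => ?_⟩, hf.injective⟩⟩
  rcases cycleGraph_adj.mp huv with h | h
  · rw [sub_eq_iff_eq_add'.mp h]
    exact (hf.adj_add_one v).symm
  · rw [sub_eq_iff_eq_add'.mp h]
    exact hf.adj_add_one u

theorem mem_oddCycleLengths (hf : G.IsCyclicSeq f) (hn : 3 ≤ n) (hodd : Odd n) :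
    n ∈ oddCycleLengths G :=
  ⟨hodd, hf.exists_isCycle hn⟩

theorem arc (hf : G.IsCyclicSeq f) (a : ZMod n) {d : ℕ} (hd : d < n)
    (hchord : G.Adj (f (a + d)) (f a)) : G.IsCyclicSeq (cycleArc f a d) where
  injective i j hij := by
    have hval : ((i.val : ℕ) : ZMod n) = j.val := add_left_cancel (hf.injective hij)
    rw [ZMod.natCast_eq_natCast_iff', Nat.mod_eq_of_lt (by have := i.val_lt; omega),
      Nat.mod_eq_of_lt (by have := j.val_lt; omega)] at hval
    exact ZMod.val_injective _ hval
  adj_add_one i := by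
    obtain ⟨k, hk, rfl⟩ : ∃ k ≤ d, (k : ZMod (d + 1)) = i :=
      ⟨i.val, Nat.lt_succ_iff.mp i.val_lt, ZMod.natCast_zmod_val i⟩
    rcases hk.lt_or_eq with hk | rfl
    · rw [← Nat.cast_succ, cycleArc_natCast _ _ hk.le, cycleArc_natCast _ _ hk, Nat.cast_succ,
        ← add_assoc]
      exact hf.adj_add_one _
    · rw [← Nat.cast_succ, ZMod.natCast_self, ← Nat.cast_zero, cycleArc_natCast _ _ le_rfl,
        cycleArc_natCast _ _ (Nat.zero_le _), Nat.cast_zero, add_zero]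
      exact hchord

theorem span_eq_two_of_adj (hf : G.IsCyclicSeq f) (hodd : Odd n) (hL : oddCycleLengths G ⊆ {3, n})
    {a : ZMod n} {d : ℕ} (hd : 2 ≤ d) (hdn : d + 2 ≤ n) (hadj : G.Adj (f a) (f (a + d))) :
    d = 2 ∨ d + 2 = n := by
  rcases Nat.even_or_odd d with hev | hdodd
  · have := hL ((hf.arc a (by omega) hadj.symm).mem_oddCycleLengths (by omega) hev.add_one)
    simp only [Set.mem_insert_iff, Set.mem_singleton_iff] at this
    omega
  · have hback : a + d + ((n - d : ℕ) : ZMod n) = a := by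
      rw [Nat.cast_sub (by omega), ZMod.natCast_self]; ring
    have hcyc := hf.arc (a + d) (d := n - d) (by omega) (by rw [hback]; exact hadj)
    have := hL (hcyc.mem_oddCycleLengths (by omega) (by
      obtain ⟨k, rfl⟩ := hodd; obtain ⟨j, rfl⟩ := hdodd; exact ⟨k - j, by omega⟩))
    simp only [Set.mem_insert_iff, Set.mem_singleton_iff] at this
    omega

theorem exists_isCycle_length_sub_two (hf : G.IsCyclicSeq f) (hn : 5 ≤ n) {a : ZMod n} {m : ℕ}
    (hm : 2 ≤ m) (hmn : m + 2 ≤ n) (h₁ : G.Adj (f a) (f (a + 2)))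
    (h₂ : G.Adj (f (a + m)) (f (a + m + 2))) :
    ∃ (u : V) (w : G.Walk u u), w.IsCycle ∧ w.length = n - 2 := by
  -- Shortcut `f` along the first chord to an `(n - 1)`-cycle starting at `a + 2`; there the
  -- second chord closes the arc from `a + m + 2` round to `a + m`.
  have hshort : G.IsCyclicSeq (cycleArc f (a + 2) (n - 2)) :=
    hf.arc (a + 2) (by omega) (by
      convert h₁ using 2
      rw [Nat.cast_sub (by omega), ZMod.natCast_self]
      push_cast; ring)
  have hchord : G.Adj (cycleArc f (a + 2) (n - 2) ((m : ZMod (n - 2 + 1)) + (n - 3 : ℕ)))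
      (cycleArc f (a + 2) (n - 2) m) := by
    have hwrap : m + (n - 3) = (m - 2) + (n - 2 + 1) := by omega
    rw [← Nat.cast_add, hwrap, Nat.cast_add, ZMod.natCast_self, add_zero,
      cycleArc_natCast _ _ (by omega), cycleArc_natCast _ _ (by omega), Nat.cast_sub hm]
    convert h₂ using 2 <;> push_cast <;> ring
  obtain ⟨u, w, hw, hlen⟩ := (hshort.arc (m : ZMod (n - 2 + 1)) (by omega) hchord).exists_isCycle
    (by omega)
  exact ⟨u, w, hw, by omega⟩

variable (hodd : Odd n) (hL : oddCycleLengths G ⊆ {3, n})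
include hodd hL

theorem exists_eq_adj_add_two_of_isChord (hf : G.IsCyclicSeq f) {a b : ZMod n}
    (hc : IsChord G f a b) : ∃ p, G.Adj (f p) (f (p + 2)) ∧ s(f a, f b) = s(f p, f (p + 2)) := by
  have : NeZero n := ⟨hodd.pos.ne'⟩
  obtain ⟨hadj, h₁, h₂⟩ := hc
  obtain ⟨d, hd, hdn, rfl⟩ := ZMod.exists_eq_add_natCast (fun h => hadj.ne (by rw [h])) h₁ h₂
  rcases hf.span_eq_two_of_adj hodd hL hd hdn hadj with rfl | hdn
  · exact ⟨a, hadj, rfl⟩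
  · have ha : a = a + d + 2 := by
      rw [add_assoc, ← Nat.cast_ofNat, ← Nat.cast_add, hdn, ZMod.natCast_self, add_zero]
    refine ⟨a + d, ha ▸ hadj.symm, ?_⟩
    rw [← ha, Sym2.eq_swap]

theorem eq_or_eq_add_one_of_adj_add_two (hf : G.IsCyclicSeq f) (hn : 7 ≤ n) {p q : ZMod n}
    (hp : G.Adj (f p) (f (p + 2))) (hq : G.Adj (f q) (f (q + 2))) :
    q = p ∨ q = p + 1 ∨ p = q + 1 := by
  have : NeZero n := ⟨hodd.pos.ne'⟩
  by_contra! hfar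
  obtain ⟨m, hm, hmn, rfl⟩ := ZMod.exists_eq_add_natCast hfar.1 hfar.2.1 hfar.2.2
  have hodd' : Odd (n - 2) := by obtain ⟨k, rfl⟩ := hodd; exact ⟨k - 1, by omega⟩
  have := hL ⟨hodd', hf.exists_isCycle_length_sub_two (by omega) hm hmn hp hq⟩
  simp only [Set.mem_insert_iff, Set.mem_singleton_iff] at this
  omega

end IsCyclicSeq
end SimpleGraph

theorem stmt5_general {V : Type*} (G : SimpleGraph V) (l : ℕ) (hl : 2 ≤ l)
    (hL : oddCycleLengths G = {3, 3 + 2 * l})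
    -- `C` is a `k`-cycle of `G`, `k = 3 + 2l`, given as an injective cyclic sequence
    (f : ZMod (3 + 2 * l) → V) (hf : Function.Injective f)
    (hcyc : ∀ i, G.Adj (f i) (f (i + 1)))
    -- `C` has at least two chords
    (hchords : ∃ a b a' b' : ZMod (3 + 2 * l),
      IsChord G f a b ∧ IsChord G f a' b' ∧ s(f a, f b) ≠ s(f a', f b')) :
    ∃ i : ZMod (3 + 2 * l),
      G.Adj (f i) (f (i + 2)) ∧ G.Adj (f (i + 1)) (f (i + 3)) ∧
      ∀ a b, IsChord G f a b →
        s(f a, f b) = s(f i, f (i + 2)) ∨ s(f a, f b) = s(f (i + 1), f (i + 3)) := by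
  have hC : G.IsCyclicSeq f := ⟨hf, hcyc⟩
  have hodd : Odd (3 + 2 * l) := ⟨l + 1, by ring⟩
  have chord {a b} (h : IsChord G f a b) := hC.exists_eq_adj_add_two_of_isChord hodd hL.subset h
  have near {p q} := hC.eq_or_eq_add_one_of_adj_add_two hodd hL.subset (by omega) (p := p) (q := q)
  obtain ⟨a, b, a', b', hab, hab', hne⟩ := hchords
  obtain ⟨p, hp, hpab⟩ := chord hab
  obtain ⟨q, hq, hqab⟩ := chord hab'
  obtain ⟨i, hi, hi'⟩ : ∃ i, G.Adj (f i) (f (i + 2)) ∧ G.Adj (f (i + 1)) (f (i + 1 + 2)) := by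
    rcases near hp hq with rfl | rfl | rfl
    · exact absurd (hpab.trans hqab.symm) hne
    · exact ⟨p, hp, hq⟩
    · exact ⟨q, hq, hp⟩
  have h3 : i + 1 + 2 = i + 3 := by ring
  refine ⟨i, hi, h3 ▸ hi', fun x y hxy => ?_⟩
  obtain ⟨r, hr, hrxy⟩ := chord hxy
  rw [hrxy, ← h3]
  rcases ZMod.eq_or_eq_add_one_of_near (by omega) (near hi hr) (near hi' hr) with rfl | rfl
  · exact .inl rfl
  · exact .inr rfl

theorem stmt5 {V : Type*} [Fintype V] (G : SimpleGraph V) (l : ℕ) (hl : 2 ≤ l)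
    (hK4 : G.CliqueFree 4)
    (hcrit : IsFourCritical G)
    (hL : oddCycleLengths G = {3, 3 + 2 * l})
    -- `C` is a `k`-cycle of `G`, `k = 3 + 2l`, given as an injective cyclic sequence
    (f : ZMod (3 + 2 * l) → V) (hf : Function.Injective f)
    (hcyc : ∀ i, G.Adj (f i) (f (i + 1)))
    -- `C` has at least two chords
    (hchords : ∃ a b a' b' : ZMod (3 + 2 * l),
      IsChord G f a b ∧ IsChord G f a' b' ∧ s(f a, f b) ≠ s(f a', f b')) :
    ∃ i : ZMod (3 + 2 * l),
      G.Adj (f i) (f (i + 2)) ∧ G.Adj (f (i + 1)) (f (i + 3)) ∧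
      ∀ a b, IsChord G f a b →
        s(f a, f b) = s(f i, f (i + 2)) ∨ s(f a, f b) = s(f (i + 1), f (i + 3)) :=
  stmt5_general G l hl hL f hf hcyc hchords
end

section
/- Every 2-connected non-bipartite graph in which every odd cycle is a triangle is either K₄ or a book B*ᵣ (r triangles sharing a common edge) for some r ≥ 1. -/
open SimpleGraph

/-- `G` is 2-connected: at least 3 vertices and deleting any single vertex
leaves a connected graph. -/
def TwoConnected {V : Type*} [Fintype V] (G : SimpleGraph V) : Prop :=
  3 ≤ Fintype.card V ∧ ∀ v : V, (G.induce ({v}ᶜ : Set V)).Connected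

/-- The book `B*_r`: `r` triangles sharing a common edge, i.e. `K₂ + (r` independent
vertices`)`. -/
def book (r : ℕ) : SimpleGraph (Fin 2 ⊕ Fin r) where
  Adj a b := a ≠ b ∧ (a.isLeft = true ∨ b.isLeft = true)
  symm := ⟨fun a b ⟨h1, h2⟩ => ⟨h1.symm, h2.symm⟩⟩
  loopless := ⟨fun a h => h.1 rfl⟩

/-!
A graph that is not 2-colourable has an odd closed walk, hence an odd cycle, hence here a
triangle `abc`. Every vertex is adjacent to two of `a`, `b`, `c`. For a neighbour `v` of `a`
outside the triangle, a path from `v` to `{b, c}` avoiding `a` closes up through `a` into two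
cycles of consecutive lengths; the odd one is a triangle, so `v` is adjacent to `b` or `c`. This
propagates along edges, because a vertex seeing only one vertex of the triangle would lie on a
5-cycle. If some vertex sees all of `a`, `b`, `c`, the same 5-cycle argument leaves no room for
a fifth vertex and the graph is `K₄`. Otherwise all vertices off one edge of the triangle see
both of its ends and are pairwise non-adjacent, which is a book.
-/

namespace SimpleGraph

variable {V : Type*} {G : SimpleGraph V}

namespace Walk

lemma exists_eq_append_append_of_not_isPath [DecidableEq V] {u v : V} (p : G.Walk u v)
    (hp : ¬ p.IsPath) :
    ∃ (x : V) (q : G.Walk u x) (c : G.Walk x x) (r : G.Walk x v),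
      ¬ c.Nil ∧ p = q.append (c.append r) := by
  induction p with
  | nil => exact absurd .nil hp
  | @cons u w v h p ih =>
    by_cases hpath : p.IsPath
    · have hu : u ∈ p.support := by_contra fun hu => hp (hpath.cons hu)
      refine ⟨u, nil, cons h (p.takeUntil u hu), p.dropUntil u hu, not_nil_cons, ?_⟩
      rw [nil_append, cons_append, take_spec]
    · obtain ⟨x, q, c, r, hc, rfl⟩ := ih hpath
      exact ⟨x, cons h q, c, r, hc, rfl⟩

lemma exists_isCycle_odd_length [DecidableEq V] {u : V} (w : G.Walk u u) (hw : Odd w.length) :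
    ∃ (v : V) (c : G.Walk v v), c.IsCycle ∧ Odd c.length := by
  induction hn : w.length using Nat.strong_induction_on generalizing u with
  | _ n ih =>
  cases w with
  | nil => simp at hw
  | @cons _ v _ h p =>
    by_cases hp : p.IsPath
    · refine ⟨u, cons h p, isCycle_iff_isPath_tail_and_le_length.mpr ⟨by simpa, ?_⟩, hw⟩
      have hp0 : p.length ≠ 0 := fun h0 => h.ne (eq_of_length_eq_zero h0).symm
      rw [length_cons, Nat.odd_iff] at hw
      rw [length_cons]
      omega
    · obtain ⟨x, q, c, r, hc, rfl⟩ := exists_eq_append_append_of_not_isPath p hp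
      have hc0 : c.length ≠ 0 := mt length_eq_zero_iff.mp hc
      simp only [length_cons, length_append] at hw hn
      rcases Nat.even_or_odd c.length with hce | hco
      · -- the closed walk `u → x → u` left after cutting out `c` is then odd
        refine ih _ ?_ (cons h (q.append r)) ?_ rfl <;> simp only [length_cons, length_append]
        · omega
        · rw [Nat.odd_iff] at hw ⊢
          rw [Nat.even_iff] at hce
          omega
      · exact ih _ (by omega) c hco rfl

lemma IsPath.isCycle_cons_concat {x v t : V} {p : G.Walk v t} (hp : p.IsPath) (hx : x ∉ p.support)
    (hvt : v ≠ t) (hxv : G.Adj x v) (htx : G.Adj t x) : (cons hxv (p.concat htx)).IsCycle := by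
  refine isCycle_iff_isPath_tail_and_le_length.mpr ⟨by simpa using hp.concat hx htx, ?_⟩
  have : p.length ≠ 0 := fun h0 => hvt (eq_of_length_eq_zero h0)
  simp only [length_cons, length_concat]
  omega

end Walk

open Walk

lemma exists_isPath_notMem_support {x u v : V} (h : (G.induce {x}ᶜ).Connected) (hu : u ≠ x)
    (hv : v ≠ x) : ∃ p : G.Walk u v, p.IsPath ∧ x ∉ p.support := by
  obtain ⟨p, hp⟩ := h.exists_isPath ⟨u, Set.mem_compl_singleton_iff.mpr hu⟩
    ⟨v, Set.mem_compl_singleton_iff.mpr hv⟩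
  have hxp : x ∉ (p.map (Embedding.induce (G := G) _).toHom).support := by
    rw [Walk.support_map]
    simp
  exact ⟨_, hp.map (Embedding.induce (G := G) _).injective, hxp⟩

def OddCyclesAreTriangles (G : SimpleGraph V) : Prop :=
  ∀ (u : V) (w : G.Walk u u), w.IsCycle → Odd w.length → w.length = 3

lemma exists_triangle_of_not_colorable_two (htri : G.OddCyclesAreTriangles)
    (hG : ¬ G.Colorable 2) : ∃ x y z : V, G.Adj x y ∧ G.Adj y z ∧ G.Adj z x := by
  classical
  obtain ⟨u, w, hw⟩ : ∃ (u : V) (w : G.Walk u u), Odd w.length := by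
    simpa [two_colorable_iff_forall_loop_even] using hG
  obtain ⟨v, c, hc, hodd⟩ := w.exists_isCycle_odd_length hw
  have h3 := htri v c hc hodd
  refine ⟨c.getVert 0, c.getVert 1, c.getVert 2, c.adj_getVert_succ (by omega),
    c.adj_getVert_succ (by omega), ?_⟩
  simpa [← h3] using c.adj_getVert_succ (i := 2) (by omega)

def AdjToTwo (G : SimpleGraph V) (a b c v : V) : Prop :=
  G.Adj v a ∧ G.Adj v b ∨ G.Adj v b ∧ G.Adj v c ∨ G.Adj v c ∧ G.Adj v a

lemma AdjToTwo.rotate {a b c v : V} (h : G.AdjToTwo a b c v) : G.AdjToTwo b c a v := by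
  unfold AdjToTwo at *
  tauto

namespace OddCyclesAreTriangles

variable {a b c u v : V}

lemma false_of_five_cycle (htri : G.OddCyclesAreTriangles) {d e : V} (hab : G.Adj a b)
    (hbc : G.Adj b c) (hcd : G.Adj c d) (hde : G.Adj d e) (hea : G.Adj e a) (hac : a ≠ c)
    (had : a ≠ d) (hbd : b ≠ d) (hbe : b ≠ e) (hce : c ≠ e) : False := by
  have hcyc : (cons hab (cons hbc (cons hcd (cons hde (cons hea nil))))).IsCycle := by
    rw [cons_isCycle_iff, isPath_def]
    simp only [support_cons, support_nil, List.nodup_cons, List.mem_cons, List.not_mem_nil,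
      or_false, not_or, List.nodup_nil, and_true, edges_cons, edges_nil, Sym2.eq, Sym2.rel_iff',
      Prod.mk.injEq, Prod.swap_prod_mk, not_and]
    grind [Adj.ne]
  simpa using htri a _ hcyc ⟨2, rfl⟩

lemma eq_or_adj_of_isPath (htri : G.OddCyclesAreTriangles) {x t o : V} {p : G.Walk v t}
    (hp : p.IsPath) (hxp : x ∉ p.support) (hop : o ∉ p.support) (hxv : G.Adj x v)
    (htx : G.Adj t x) (hto : G.Adj t o) (hox : G.Adj o x) (hvo : v ≠ o) : v = t ∨ G.Adj v t := by
  by_cases hvt : v = t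
  · exact .inl hvt
  -- the cycles `x v ⋯ t o x` and `x v ⋯ t x` have lengths `p.length + 3` and `p.length + 2`
  rcases Nat.even_or_odd p.length with hev | hodd
  · have hxp' : x ∉ (p.concat hto).support := by simp [hxp, hox.ne']
    have h3 := htri x _ ((hp.concat hop hto).isCycle_cons_concat hxp' hvo hxv hox) (by
      simpa using hev.add_one.add_one.add_one)
    simp only [length_cons, length_concat] at h3
    exact .inl (eq_of_length_eq_zero (p := p) (by omega))
  · have h3 := htri x _ (hp.isCycle_cons_concat hxp hvt hxv htx) (by simpa using hodd.add_one.add_one)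
    simp only [length_cons, length_concat] at h3
    exact .inr (adj_of_length_eq_one (p := p) (by omega))

lemma adj_or_adj_of_adj (htri : G.OddCyclesAreTriangles) (ha : (G.induce {a}ᶜ).Connected)
    (hab : G.Adj a b) (hbc : G.Adj b c) (hca : G.Adj c a) (hva : G.Adj v a) (hvb : v ≠ b)
    (hvc : v ≠ c) : G.Adj v b ∨ G.Adj v c := by
  classical
  obtain ⟨p, hp, hap⟩ := exists_isPath_notMem_support ha hva.ne hab.ne'
  by_cases hcp : c ∈ p.support
  · refine .inr ((htri.eq_or_adj_of_isPath (hp.takeUntil hcp)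
      (fun h => hap (support_takeUntil_subset_support _ hcp h))
      (endpoint_notMem_support_takeUntil hp hcp hbc.ne) hva.symm hca hbc.symm hab.symm hvb
      ).resolve_left hvc)
  · exact .inl ((htri.eq_or_adj_of_isPath hp hap hcp hva.symm hab.symm hbc hca hvc
      ).resolve_left hvb)

lemma adjToTwo_of_adj_of_adj_adj (htri : G.OddCyclesAreTriangles)
    (h2 : ∀ w : V, (G.induce {w}ᶜ).Connected) (hab : G.Adj a b) (hbc : G.Adj b c)
    (hca : G.Adj c a) (hua : G.Adj u a) (hub : G.Adj u b) (huv : G.Adj u v) (hva : v ≠ a)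
    (hvb : v ≠ b) (hvc : v ≠ c) : G.AdjToTwo a b c v := by
  by_contra hv
  unfold AdjToTwo at hv
  rcases htri.adj_or_adj_of_adj (h2 u) hua hab hub.symm huv.symm hva hvb with hv' | hv'
  · have huc : u ≠ c := by rintro rfl; exact hv (.inr (.inr ⟨huv.symm, hv'⟩))
    exact htri.false_of_five_cycle huv.symm hub hbc hca hv'.symm hvb hvc huc hua.ne hab.ne'
  · have huc : u ≠ c := by rintro rfl; exact hv (.inr (.inl ⟨hv', huv.symm⟩))
    exact htri.false_of_five_cycle huv.symm hua hca.symm hbc.symm hv'.symm hva hvc huc hub.ne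
      hab.ne

lemma adjToTwo_of_adj (htri : G.OddCyclesAreTriangles) (h2 : ∀ w : V, (G.induce {w}ᶜ).Connected)
    (hab : G.Adj a b) (hbc : G.Adj b c) (hca : G.Adj c a) (hu : G.AdjToTwo a b c u)
    (huv : G.Adj u v) : G.AdjToTwo a b c v := by
  by_cases hva : v = a
  · subst hva; exact .inr (.inl ⟨hab, hca.symm⟩)
  by_cases hvb : v = b
  · subst hvb; exact .inr (.inr ⟨hbc, hab.symm⟩)
  by_cases hvc : v = c
  · subst hvc; exact .inl ⟨hca, hbc.symm⟩
  rcases hu with ⟨hua, hub⟩ | ⟨hub, huc⟩ | ⟨huc, hua⟩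
  · exact htri.adjToTwo_of_adj_of_adj_adj h2 hab hbc hca hua hub huv hva hvb hvc
  · exact (htri.adjToTwo_of_adj_of_adj_adj h2 hbc hca hab hub huc huv hvb hvc hva).rotate.rotate
  · exact (htri.adjToTwo_of_adj_of_adj_adj h2 hca hab hbc huc hua huv hvc hva hvb).rotate

lemma adjToTwo (htri : G.OddCyclesAreTriangles) (h2 : ∀ w : V, (G.induce {w}ᶜ).Connected)
    (hab : G.Adj a b) (hbc : G.Adj b c) (hca : G.Adj c a) (v : V) : G.AdjToTwo a b c v := by
  have propagate {x y : V} (p : G.Walk x y) (hx : G.AdjToTwo a b c x) : G.AdjToTwo a b c y := by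
    induction p with
    | nil => exact hx
    | cons h _ ih => exact ih (htri.adjToTwo_of_adj h2 hab hbc hca hx h)
  by_cases hva : v = a
  · subst hva; exact .inr (.inl ⟨hab, hca.symm⟩)
  obtain ⟨p, -, -⟩ := exists_isPath_notMem_support (h2 a) hab.ne' hva
  exact propagate p (.inr (.inr ⟨hbc, hab.symm⟩))

lemma eq_or_eq_or_eq_or_eq_of_adj_adj_adj (htri : G.OddCyclesAreTriangles) (hab : G.Adj a b)
    (hbc : G.Adj b c) (hca : G.Adj c a) (hva : G.Adj v a) (hvb : G.Adj v b) (hvc : G.Adj v c)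
    (hall : ∀ w, G.AdjToTwo a b c w) (w : V) : w = a ∨ w = b ∨ w = c ∨ w = v := by
  by_contra! hw
  obtain ⟨hwa, hwb, hwc, hwv⟩ := hw
  rcases hall w with ⟨h1, h2⟩ | ⟨h1, h2⟩ | ⟨h1, h2⟩
  · exact htri.false_of_five_cycle h1 hca.symm hvc.symm hvb h2.symm hwc hwv hva.ne' hab.ne hbc.ne'
  · exact htri.false_of_five_cycle h1 hab.symm hva.symm hvc h2.symm hwa hwv hvb.ne' hbc.ne hca.ne'
  · exact htri.false_of_five_cycle h1 hbc.symm hvb.symm hva h2.symm hwb hwv hvc.ne' hca.ne hab.ne'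

lemma forall_adj_adj_of_adj_adj (htri : G.OddCyclesAreTriangles) (hab : G.Adj a b)
    (hbc : G.Adj b c) (hca : G.Adj c a) (hK : ∀ v, ¬ (G.Adj v a ∧ G.Adj v b ∧ G.Adj v c))
    (hall : ∀ w, G.AdjToTwo a b c w) (hva : G.Adj v a) (hvb : G.Adj v b) (hvc : v ≠ c)
    (w : V) (hwa : w ≠ a) (hwb : w ≠ b) : G.Adj w a ∧ G.Adj w b := by
  by_cases hwc : w = c
  · subst hwc; exact ⟨hca, hbc.symm⟩
  rcases hall w with h | ⟨hwb', hwc'⟩ | ⟨hwc', hwa'⟩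
  · exact h
  all_goals
    have hvw : v ≠ w := by rintro rfl; exact hK v ⟨hva, hvb, hwc'⟩
    exfalso
  · exact htri.false_of_five_cycle hva hca.symm hwc'.symm hwb' hvb.symm hvc hvw hwa.symm hab.ne
      hbc.ne'
  · exact htri.false_of_five_cycle hvb hbc hwc'.symm hwa' hva.symm hvc hvw hwb.symm hab.ne'
      hca.ne

lemma adj_iff_of_forall_adj_adj (htri : G.OddCyclesAreTriangles) [DecidableEq V]
    (hab : G.Adj a b) (hbc : G.Adj b c) (hca : G.Adj c a)
    (hK : ∀ v, ¬ (G.Adj v a ∧ G.Adj v b ∧ G.Adj v c))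
    (hpages : ∀ w, w ≠ a → w ≠ b → G.Adj w a ∧ G.Adj w b) (u w : V) :
    G.Adj u w ↔ u ≠ w ∧ (u ∈ ({a, b} : Finset V) ∨ w ∈ ({a, b} : Finset V)) := by
  have spine (t : V) (ht : t = a ∨ t = b) (w : V) (htw : t ≠ w) : G.Adj t w := by
    by_cases hw : w = a ∨ w = b
    · rcases ht with rfl | rfl <;> rcases hw with rfl | rfl <;>
        first | exact absurd rfl htw | exact hab | exact hab.symm
    · push Not at hw
      rcases ht with rfl | rfl
      exacts [(hpages w hw.1 hw.2).1.symm, (hpages w hw.1 hw.2).2.symm]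
  simp only [Finset.mem_insert, Finset.mem_singleton]
  refine ⟨fun huw => ⟨huw.ne, ?_⟩, ?_⟩
  · by_contra! h
    obtain ⟨⟨hua, hub⟩, hwa, hwb⟩ := h
    have huc : u ≠ c := by
      rintro rfl; exact hK w ⟨(hpages w hwa hwb).1, (hpages w hwa hwb).2, huw.symm⟩
    have hwc : w ≠ c := by
      rintro rfl; exact hK u ⟨(hpages u hua hub).1, (hpages u hua hub).2, huw⟩
    exact htri.false_of_five_cycle huw (hpages w hwa hwb).1 hca.symm hbc.symm
      (hpages u hua hub).2.symm hua huc hwc hwb hab.ne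
  · rintro ⟨huw, hu | hw⟩
    exacts [spine u hu w huw, (spine w hw u huw.symm).symm]

lemma exists_finset_card_two_adj_iff (htri : G.OddCyclesAreTriangles) [DecidableEq V]
    (hab : G.Adj a b) (hbc : G.Adj b c) (hca : G.Adj c a)
    (hK : ∀ v, ¬ (G.Adj v a ∧ G.Adj v b ∧ G.Adj v c)) (hall : ∀ w, G.AdjToTwo a b c w) :
    ∃ s : Finset V, s.card = 2 ∧ ∀ u w, G.Adj u w ↔ u ≠ w ∧ (u ∈ s ∨ w ∈ s) := by
  by_cases hout : ∃ v, v ≠ a ∧ v ≠ b ∧ v ≠ c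
  · obtain ⟨v, hva, hvb, hvc⟩ := hout
    rcases hall v with ⟨h1, h2⟩ | ⟨h1, h2⟩ | ⟨h1, h2⟩
    · exact ⟨{a, b}, Finset.card_pair hab.ne, htri.adj_iff_of_forall_adj_adj hab hbc hca hK
        (htri.forall_adj_adj_of_adj_adj hab hbc hca hK hall h1 h2 hvc)⟩
    · have hK' v (h : G.Adj v b ∧ G.Adj v c ∧ G.Adj v a) := hK v ⟨h.2.2, h.1, h.2.1⟩
      have hall' w : G.AdjToTwo b c a w := (hall w).rotate
      exact ⟨{b, c}, Finset.card_pair hbc.ne, htri.adj_iff_of_forall_adj_adj hbc hca hab hK'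
        (htri.forall_adj_adj_of_adj_adj hbc hca hab hK' hall' h1 h2 hva)⟩
    · have hK' v (h : G.Adj v c ∧ G.Adj v a ∧ G.Adj v b) := hK v ⟨h.2.1, h.2.2, h.1⟩
      have hall' w : G.AdjToTwo c a b w := (hall w).rotate.rotate
      exact ⟨{c, a}, Finset.card_pair hca.ne, htri.adj_iff_of_forall_adj_adj hca hab hbc hK'
        (htri.forall_adj_adj_of_adj_adj hca hab hbc hK' hall' h1 h2 hvb)⟩
  · push Not at hout
    refine ⟨{a, b}, Finset.card_pair hab.ne, htri.adj_iff_of_forall_adj_adj hab hbc hca hK ?_⟩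
    intro w hwa hwb
    rw [hout w hwa hwb]
    exact ⟨hca, hbc.symm⟩

end OddCyclesAreTriangles

lemma nonempty_iso_top_fin_four [Fintype V] {a b c d : V} (hab : G.Adj a b) (hbc : G.Adj b c)
    (hca : G.Adj c a) (hda : G.Adj d a) (hdb : G.Adj d b) (hdc : G.Adj d c)
    (hV : ∀ w, w = a ∨ w = b ∨ w = c ∨ w = d) : Nonempty (G ≃g (⊤ : SimpleGraph (Fin 4))) := by
  classical
  have hG : G = ⊤ := by
    ext u w
    refine ⟨Adj.ne, fun huw => ?_⟩
    rcases hV u with rfl | rfl | rfl | rfl <;> rcases hV w with rfl | rfl | rfl | rfl <;>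
      first | exact absurd rfl huw | assumption | exact Adj.symm ‹_›
  have hcard : Fintype.card V = 4 := by
    rw [← Finset.card_univ, Finset.card_eq_four]
    exact ⟨a, b, c, d, hab.ne, hca.ne', hda.ne', hbc.ne, hdb.ne', hdc.ne',
      (Finset.eq_univ_of_forall fun w => by simpa using hV w).symm⟩
  subst hG
  exact ⟨Iso.completeGraph (Fintype.equivFinOfCardEq hcard)⟩

lemma nonempty_iso_book [Fintype V] [DecidableEq V] {s : Finset V} (hs : s.card = 2)
    (hG : ∀ u w, G.Adj u w ↔ u ≠ w ∧ (u ∈ s ∨ w ∈ s)) :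
    Nonempty (G ≃g book (Fintype.card V - 2)) := by
  have hcard : Fintype.card {w // w ∉ s} = Fintype.card V - 2 := by
    rw [Fintype.card_subtype_compl, Fintype.card_coe, hs]
  let e : Fin 2 ⊕ Fin (Fintype.card V - 2) ≃ V :=
    (Equiv.sumCongr (s.equivFinOfCardEq hs).symm (Fintype.equivFinOfCardEq hcard).symm).trans
      (Equiv.sumCompl (· ∈ s))
  have he (i : Fin 2 ⊕ Fin (Fintype.card V - 2)) : e i ∈ s ↔ i.isLeft := by
    rcases i with i | i
    · simp [e]
    · simpa [e] using ((Fintype.equivFinOfCardEq hcard).symm i).2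
  refine ⟨⟨e.symm, fun {u w} => ?_⟩⟩
  simp only [book, ne_eq, EmbeddingLike.apply_eq_iff_eq, hG, ← he, Equiv.apply_symm_apply]

end SimpleGraph

theorem stmt6 {V : Type*} [Fintype V] (G : SimpleGraph V)
    (h2c : TwoConnected G)
    (hnb : ¬ G.Colorable 2)
    (htri : ∀ (u : V) (w : G.Walk u u), w.IsCycle → Odd w.length → w.length = 3) :
    Nonempty (G ≃g (⊤ : SimpleGraph (Fin 4))) ∨
      ∃ r : ℕ, 1 ≤ r ∧ Nonempty (G ≃g book r) := by
  classical
  have htri : G.OddCyclesAreTriangles := htri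
  obtain ⟨x, y, z, hxy, hyz, hzx⟩ := exists_triangle_of_not_colorable_two htri hnb
  have hall := htri.adjToTwo h2c.2 hxy hyz hzx
  by_cases hK : ∃ v, G.Adj v x ∧ G.Adj v y ∧ G.Adj v z
  · obtain ⟨v, hvx, hvy, hvz⟩ := hK
    exact .inl (nonempty_iso_top_fin_four hxy hyz hzx hvx hvy hvz
      (htri.eq_or_eq_or_eq_or_eq_of_adj_adj_adj hxy hyz hzx hvx hvy hvz hall))
  · obtain ⟨s, hs, hG⟩ := htri.exists_finset_card_two_adj_iff hxy hyz hzx (not_exists.mp hK) hall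
    exact .inr ⟨_, by have := h2c.1; omega, nonempty_iso_book hs hG⟩
end

section
/- Let G be a 4-critical 3-connected graph with L(G) = {k, k+2l}, k ≥ 5, l ≥ 1, in which every two odd cycles share at least two vertices. Let C be a non-separating induced odd cycle in G and let H = G − V(C), which is connected and bipartite with bipartition (A, B). Then for every vertex u of C, all neighbors of u in H lie in A or all lie in B. -/
open SimpleGraph

/-- `G` is 3-connected: at least 4 vertices and deleting any set of at most two
vertices leaves a connected graph. -/
def ThreeConnected {V : Type*} [Fintype V] (G : SimpleGraph V) : Prop :=
  4 ≤ Fintype.card V ∧ ∀ u v : V, (G.induce (({u, v} : Set V)ᶜ)).Connected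

/-!
If a vertex `u` of `C` had a neighbour `b ∈ A` and a neighbour `a ∈ B`, a path from `b` to `a`
in the connected bipartite graph `H` would have odd length, and closing it up through `u` would
give an odd cycle meeting `C` in the single vertex `u`, contradicting the assumption that any two
odd cycles share two vertices.
-/

namespace SimpleGraph

variable {V : Type*} {G : SimpleGraph V}

open Classical in
noncomputable def Coloring.ofIndepCover {S A B : Set V} (hS : S ⊆ A ∪ B)
    (hA : ∀ a ∈ A, ∀ a' ∈ A, ¬ G.Adj a a') (hB : ∀ b ∈ B, ∀ b' ∈ B, ¬ G.Adj b b') :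
    (G.induce S).Coloring Bool :=
  Coloring.mk (fun x => decide ((x : V) ∈ A)) fun {x y} hxy => by
    have hx := hS x.2
    have hy := hS y.2
    by_cases hxA : (x : V) ∈ A <;> by_cases hyA : (y : V) ∈ A
    · exact absurd hxy (hA _ hxA _ hyA)
    · simp [hxA, hyA]
    · simp [hxA, hyA]
    · exact absurd hxy (hB _ (hx.resolve_left hxA) _ (hy.resolve_left hyA))

theorem Walk.odd_length_of_indepCover {S A B : Set V} (hS : S ⊆ A ∪ B)
    (hA : ∀ a ∈ A, ∀ a' ∈ A, ¬ G.Adj a a') (hB : ∀ b ∈ B, ∀ b' ∈ B, ¬ G.Adj b b')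
    {x y : S} (p : (G.induce S).Walk x y) (hx : (x : V) ∈ A) (hy : (y : V) ∉ A) :
    Odd p.length :=
  ((Coloring.ofIndepCover hS hA hB).odd_length_iff_not_congr p).mpr <| by
    simp [Coloring.ofIndepCover, Coloring.mk, hx, hy]

theorem Walk.IsPath.isCycle_cons_concat_s14 {u a b : V} {q : G.Walk b a} (hq : q.IsPath)
    (hu : u ∉ q.support) (hab : a ≠ b) (hub : G.Adj u b) (hau : G.Adj a u) :
    (Walk.cons hub (q.concat hau)).IsCycle := by
  refine (Walk.cons_isCycle_iff _ hub).mpr ⟨hq.concat hu hau, fun he => ?_⟩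
  rw [Walk.edges_concat, List.concat_eq_append, List.mem_append, List.mem_singleton] at he
  rcases he with he | he
  · exact hu (q.fst_mem_support_of_mem_edges he)
  · rcases Sym2.eq_iff.mp he with ⟨rfl, -⟩ | ⟨-, rfl⟩
    · exact hu q.end_mem_support
    · exact hab rfl

end SimpleGraph

open SimpleGraph

theorem stmt14_general {V : Type*} (G : SimpleGraph V)
    -- every two odd cycles share at least two vertices
    (hint : ∀ (a b : V) (w1 : G.Walk a a) (w2 : G.Walk b b),
      w1.IsCycle → w2.IsCycle → Odd w1.length → Odd w2.length →
      2 ≤ ({x | x ∈ w1.support ∧ x ∈ w2.support} : Set V).ncard)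
    -- `C` is a non-separating induced odd cycle
    (v : V) (c : G.Walk v v) (hc : c.IsCycle) (hodd : Odd c.length)
    (hconn : (G.induce {x | x ∉ c.support}).Connected)
    -- `H = G - V(C)` is bipartite with bipartition `(A, B)`
    (A B : Set V)
    (hAB : A ∪ B = {x | x ∉ c.support})
    (hA : ∀ a ∈ A, ∀ a' ∈ A, ¬ G.Adj a a')
    (hB : ∀ b ∈ B, ∀ b' ∈ B, ¬ G.Adj b b') :
    ∀ u ∈ c.support,
      (∀ w, G.Adj u w → w ∉ c.support → w ∈ A) ∨
      (∀ w, G.Adj u w → w ∉ c.support → w ∈ B) := by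
  classical
  intro u hu
  by_contra! ⟨⟨a, hua, haC, haA⟩, ⟨b, hub, hbC, hbB⟩⟩
  have hbA : b ∈ A := (hAB ▸ hbC : b ∈ A ∪ B).resolve_right hbB
  obtain ⟨q⟩ := hconn.preconnected ⟨b, hbC⟩ ⟨a, haC⟩
  have hab : a ≠ b := fun h => haA (h ▸ hbA)
  let f := Embedding.induce (G := G) {x | x ∉ c.support}
  let p : G.Walk b a := q.bypass.map f.toHom
  have hpC : ∀ x ∈ p.support, x ∉ c.support := by
    intro x hx
    obtain ⟨y, -, rfl⟩ := List.mem_map.mp ((Walk.support_map _ _) ▸ hx)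
    exact y.2
  have hpodd : Odd p.length := by
    convert Walk.odd_length_of_indepCover hAB.ge hA hB q.bypass hbA haA using 1
    exact Walk.length_map _ _
  have hcyc : (Walk.cons hub (p.concat hua.symm)).IsCycle :=
    (q.bypass_isPath.map f.injective).isCycle_cons_concat_s14
      (fun h => hpC u h hu) hab hub hua.symm
  have htwo := hint v u c _ hc hcyc hodd <| by
    rw [Walk.length_cons, Walk.length_concat]
    exact hpodd.add_even even_two
  have hmeet : {x | x ∈ c.support ∧ x ∈ (Walk.cons hub (p.concat hua.symm)).support} ⊆ {u} := by
    rintro x ⟨hxc, hx⟩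
    simp only [Walk.support_cons, Walk.support_concat, List.mem_cons, List.mem_append,
      List.not_mem_nil, or_false] at hx
    rcases hx with rfl | hx | rfl
    · rfl
    · exact absurd hxc (hpC x hx)
    · rfl
  have := (Set.ncard_le_ncard hmeet).trans (Set.ncard_singleton u).le
  omega

theorem stmt14 {V : Type*} [Fintype V] (G : SimpleGraph V) (k l : ℕ)
    (hk : 5 ≤ k) (hl : 1 ≤ l)
    (hcrit : IsFourCritical G) (h3c : ThreeConnected G)
    (hL : oddCycleLengths G = {k, k + 2 * l})
    -- every two odd cycles share at least two vertices
    (hint : ∀ (a b : V) (w1 : G.Walk a a) (w2 : G.Walk b b),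
      w1.IsCycle → w2.IsCycle → Odd w1.length → Odd w2.length →
      2 ≤ ({x | x ∈ w1.support ∧ x ∈ w2.support} : Set V).ncard)
    -- `C` is a non-separating induced odd cycle
    (v : V) (c : G.Walk v v) (hc : c.IsCycle) (hodd : Odd c.length)
    (hind : ∀ x y, x ∈ c.support → y ∈ c.support → G.Adj x y → c.toSubgraph.Adj x y)
    (hconn : (G.induce {x | x ∉ c.support}).Connected)
    -- `H = G - V(C)` is bipartite with bipartition `(A, B)`
    (A B : Set V)
    (hAB : A ∪ B = {x | x ∉ c.support}) (hdisj : Disjoint A B)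
    (hA : ∀ a ∈ A, ∀ a' ∈ A, ¬ G.Adj a a')
    (hB : ∀ b ∈ B, ∀ b' ∈ B, ¬ G.Adj b b') :
    ∀ u ∈ c.support,
      (∀ w, G.Adj u w → w ∉ c.support → w ∈ A) ∨
      (∀ w, G.Adj u w → w ∉ c.support → w ∈ B) :=
  stmt14_general G hint v c hc hodd hconn A B hAB hA hB
end

section
/- Let G be a 4-critical 3-connected graph with L(G) = {k, k+2l}, k ≥ 5, l ≥ 1, in which every two odd cycles share at least two vertices, and let C be a non-separating induced odd cycle with H = G − V(C) connected and bipartite with parts (A, B) such that all neighbors in H of vertices of C lie in A. Then |C| = k. -/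
open SimpleGraph

/-! If `C` were a longest odd cycle, every vertex of `C` would have a neighbour in `A`: it has
degree at least three by 3-connectivity, and `C` is induced. Neighbours `m₁ ≠ m₂` in `A` of two
vertices at distance two on `C` are joined by an even path through `H`, and replacing the
two-edge arc of `C` between these vertices by this detour gives a longer odd cycle. Hence
vertices at distance two on `C` share their neighbour in `A`; as `|C|` is odd, so do two adjacent
vertices of `C`, which yields a triangle, impossible since the shortest odd cycle has length
`k ≥ 5`. -/

namespace SimpleGraph.Walk

variable {V : Type*} {G : SimpleGraph V}

theorem isCycle_append_comm {u v : V} {p : G.Walk u v} {q : G.Walk v u} :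
    (p.append q).IsCycle ↔ (q.append p).IsCycle := by
  suffices ∀ {u v : V} (p : G.Walk u v) (q : G.Walk v u),
      (p.append q).IsCycle → (q.append p).IsCycle from ⟨this p q, this q p⟩
  intro u v p q h
  rw [isCycle_def] at h ⊢
  obtain ⟨⟨hedges⟩, hne, hsupp⟩ := h
  refine ⟨⟨?_⟩, ?_, ?_⟩
  · rw [edges_append] at hedges ⊢
    exact List.perm_append_comm.nodup_iff.mp hedges
  · rw [ne_eq, eq_nil_iff_nil, nil_append_iff] at hne ⊢
    exact fun h => hne h.symm
  · rw [tail_support_append] at hsupp ⊢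
    exact List.perm_append_comm.nodup_iff.mp hsupp

theorem getVert_drop_append_take {v : V} (c : G.Walk v v) {i j : ℕ} (h : i + j ≤ c.length) :
    ((c.drop i).append (c.take i)).getVert j = c.getVert (i + j) := by
  rw [getVert_append, drop_length]
  split_ifs with hj
  · exact drop_getVert c i j
  · rw [show j - (c.length - i) = 0 by omega, getVert_zero, show i + j = c.length by omega,
      getVert_length]

theorem IsPath.isCycle_cons_append_cons {x z m₁ m₂ : V} {P : G.Walk z x} (hP : P.IsPath)
    (hPnil : ¬ P.Nil) {ρ : G.Walk m₁ m₂} (hρ : ρ.IsPath)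
    (hdisj : ∀ w ∈ ρ.support, w ∉ P.support)
    (h₁ : G.Adj x m₁) (h₂ : G.Adj m₂ z) :
    (cons h₁ (ρ.append (cons h₂ P))).IsCycle := by
  have hxz : x ≠ z := by
    rintro rfl
    exact hPnil (isPath_iff_nil.mp hP)
  have hQ : (cons h₁ (ρ.concat h₂)).IsPath := by
    refine (hρ.concat (fun hz => hdisj z hz P.start_mem_support) h₂).cons ?_
    rw [support_concat, List.mem_append, List.mem_singleton, not_or]
    exact ⟨fun hx => hdisj x hx P.end_mem_support, hxz⟩
  have hz : z ∉ P.support.tail := by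
    have := hP.support_nodup
    rw [← cons_tail_support] at this
    exact (List.nodup_cons.mp this).1
  have hcyc := hQ.isCycle_append hP ?_ (by simp)
  · rwa [concat_eq_append, cons_append, ← append_assoc, cons_append, nil_append] at hcyc
  · rw [support_cons, List.tail_cons, support_concat]
    intro w hw hwP
    rcases List.mem_append.mp hw with hw | hw
    · exact hdisj w hw (List.mem_of_mem_tail hwP)
    · rw [List.mem_singleton.mp hw] at hwP
      exact hz hwP

end SimpleGraph.Walk

namespace SimpleGraph

variable {V : Type*} {G : SimpleGraph V}

theorem exists_isPath_even_length_of_induce_connected {S A B : Set V}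
    (hconn : (G.induce S).Connected) (hS : S ⊆ A ∪ B)
    (hA : ∀ a ∈ A, ∀ a' ∈ A, ¬ G.Adj a a') (hB : ∀ b ∈ B, ∀ b' ∈ B, ¬ G.Adj b b')
    {a b : V} (haS : a ∈ S) (hbS : b ∈ S) (ha : a ∈ A) (hb : b ∈ A) :
    ∃ p : G.Walk a b, p.IsPath ∧ Even p.length ∧ ∀ w ∈ p.support, w ∈ S := by
  classical
  let color : (G.induce S).Coloring Bool := Coloring.mk (fun w => decide (w.1 ∈ A)) <| by
    rintro ⟨x, hx⟩ ⟨y, hy⟩ hxy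
    simp only [comap_adj, Function.Embedding.subtype_apply] at hxy
    intro h
    have hAA : x ∈ A ↔ y ∈ A := by simpa using h
    by_cases hxA : x ∈ A
    · exact hA x hxA y (hAA.mp hxA) hxy
    · exact hB x ((hS hx).resolve_left hxA) y ((hS hy).resolve_left (hxA ∘ hAA.mpr)) hxy
  obtain ⟨q, hq⟩ := (hconn ⟨a, haS⟩ ⟨b, hbS⟩).some.toPath
  let f := Embedding.induce (G := G) S
  have hfa : f ⟨a, haS⟩ = a := rfl
  have hfb : f ⟨b, hbS⟩ = b := rfl
  refine ⟨(q.map f.toHom).copy hfa hfb, ?_, ?_, ?_⟩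
  · rw [Walk.isPath_copy]
    exact hq.map f.injective
  · rw [Walk.length_copy, Walk.length_map, color.even_length_iff_congr]
    change decide (a ∈ A) = true ↔ decide (b ∈ A) = true
    simp [ha, hb]
  · intro w hw
    rw [Walk.support_copy, Walk.support_map, List.mem_map] at hw
    obtain ⟨⟨w', hw'⟩, -, rfl⟩ := hw
    exact hw'

end SimpleGraph

namespace ThreeConnected

variable {V : Type*} [Fintype V] {G : SimpleGraph V}

theorem not_neighborSet_subset_pair (h3c : ThreeConnected G) {x y z : V} (hy : y ≠ x)
    (hz : z ≠ x) : ¬ G.neighborSet x ⊆ {y, z} := by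
  classical
  intro hN
  obtain ⟨t, -, ht⟩ := Finset.exists_mem_notMem_of_card_lt_card
    (s := {x, y, z}) (t := Finset.univ) (by
      rw [Finset.card_univ]
      exact lt_of_lt_of_le (Finset.card_le_three.trans_lt (by norm_num)) h3c.1)
  simp only [Finset.mem_insert, Finset.mem_singleton, not_or] at ht
  have hx : x ∈ (({y, z} : Set V)ᶜ) := by simp [hy.symm, hz.symm]
  have ht' : t ∈ (({y, z} : Set V)ᶜ) := by simp [ht.2.1, ht.2.2]
  obtain ⟨q⟩ := h3c.2 y z ⟨x, hx⟩ ⟨t, ht'⟩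
  have hq : ¬ q.Nil := Walk.not_nil_of_ne (by simp [Ne.symm ht.1])
  exact q.snd.2 (hN (q.adj_snd hq))

theorem exists_adj_notMem_support {v : V} {c : G.Walk v v} (h3c : ThreeConnected G)
    (hc : c.IsCycle)
    (hind : ∀ x y, x ∈ c.support → y ∈ c.support → G.Adj x y → c.toSubgraph.Adj x y)
    {x : V} (hx : x ∈ c.support) : ∃ w ∉ c.support, G.Adj x w := by
  by_contra! hno
  obtain ⟨y, z, -, hN⟩ := Set.ncard_eq_two.mp (hc.ncard_neighborSet_toSubgraph_eq_two hx)
  have hne : ∀ w ∈ c.toSubgraph.neighborSet x, w ≠ x := fun w hw =>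
    (c.toSubgraph.adj_sub hw).ne.symm
  refine h3c.not_neighborSet_subset_pair (hne y (by simp [hN])) (hne z (by simp [hN]))
    fun w hw => hN ▸ hind x w hx ?_ hw
  by_contra hwc
  exact hno w hwc hw

end ThreeConnected

namespace SimpleGraph

open Walk

variable {V : Type*} {G : SimpleGraph V} {v : V} {c : G.Walk v v} {A B : Set V}

theorem eq_of_adj_getVert_of_adj_getVert_add_two (hc : c.IsCycle) (hodd : Odd c.length)
    (hmax : ∀ u (w : G.Walk u u), w.IsCycle → Odd w.length → w.length ≤ c.length)
    (hconn : (G.induce {x | x ∉ c.support}).Connected) (hAB : A ∪ B = {x | x ∉ c.support})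
    (hA : ∀ a ∈ A, ∀ a' ∈ A, ¬ G.Adj a a') (hB : ∀ b ∈ B, ∀ b' ∈ B, ¬ G.Adj b b')
    {i : ℕ} (hi : i + 2 ≤ c.length) {m₁ m₂ : V} (hm₁ : m₁ ∈ A) (hm₂ : m₂ ∈ A)
    (h₁ : G.Adj (c.getVert i) m₁) (h₂ : G.Adj (c.getVert (i + 2)) m₂) : m₁ = m₂ := by
  by_contra hne
  have hAS : ∀ {m}, m ∈ A → m ∉ c.support := fun hm => hAB.subset (Or.inl hm)
  obtain ⟨ρ, hρ, hρeven, hρS⟩ := exists_isPath_even_length_of_induce_connected hconn hAB.ge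
    hA hB (hAS hm₁) (hAS hm₂) hm₁ hm₂
  have hρpos : ρ.length ≠ 0 := fun h => hne (eq_of_length_eq_zero h)
  set w := (c.drop i).append (c.take i)
  have hw : w.IsCycle := isCycle_append_comm.mp (by rwa [append_take_drop_eq])
  set P := w.drop 2
  have hPlen : P.length = c.length - 2 := by simp [P, w]; omega
  have hPnil : ¬ P.Nil := not_nil_iff_lt_length.mpr (by have := hc.three_le_length; omega)
  have hPc : ∀ y ∈ P.support, y ∈ c.support := fun y hy => by
    rcases (mem_support_append_iff _ _).mp ((w.isSubwalk_drop 2).support_subset hy) with h | h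
    exacts [(c.isSubwalk_drop i).support_subset h, (c.isSubwalk_take i).support_subset h]
  have h₂' : G.Adj m₂ (w.getVert 2) := by
    rw [getVert_drop_append_take c hi]
    exact h₂.symm
  have hcyc := (hw.isPath_drop two_pos).isCycle_cons_append_cons hPnil hρ
    (fun y hy hyP => hρS y hy (hPc y hyP)) h₁ h₂'
  have hlen : (cons h₁ (ρ.append (cons h₂' P))).length = c.length + ρ.length := by
    simp only [length_cons, length_append, hPlen]
    omega
  have hle := hmax _ _ hcyc (hlen ▸ hodd.add_even hρeven)
  rw [hlen] at hle
  omega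

theorem exists_triangle_of_longest_odd_cycle [Fintype V] (h3c : ThreeConnected G)
    (hc : c.IsCycle) (hodd : Odd c.length)
    (hmax : ∀ u (w : G.Walk u u), w.IsCycle → Odd w.length → w.length ≤ c.length)
    (hind : ∀ x y, x ∈ c.support → y ∈ c.support → G.Adj x y → c.toSubgraph.Adj x y)
    (hconn : (G.induce {x | x ∉ c.support}).Connected) (hAB : A ∪ B = {x | x ∉ c.support})
    (hA : ∀ a ∈ A, ∀ a' ∈ A, ¬ G.Adj a a') (hB : ∀ b ∈ B, ∀ b' ∈ B, ¬ G.Adj b b')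
    (hNA : ∀ u ∈ c.support, ∀ w, G.Adj u w → w ∉ c.support → w ∈ A) :
    ∃ (u : V) (w : G.Walk u u), w.IsCycle ∧ w.length = 3 := by
  have hnbr : ∀ x ∈ c.support, ∃ m ∈ A, G.Adj x m := fun x hx =>
    let ⟨m, hmc, hm⟩ := h3c.exists_adj_notMem_support hc hind hx
    ⟨m, hNA x hx m hm hmc, hm⟩
  obtain ⟨m, hmA, hvm⟩ := hnbr v c.start_mem_support
  have hback : ∀ j, 2 * j ≤ c.length → G.Adj (c.getVert (c.length - 2 * j)) m := by
    intro j
    induction j with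
    | zero => simpa using hvm
    | succ j ih =>
      intro hj
      obtain ⟨m', hm'A, hm'⟩ := hnbr _ (c.getVert_mem_support (c.length - 2 * (j + 1)))
      have hi : c.length - 2 * (j + 1) + 2 = c.length - 2 * j := by omega
      rwa [eq_of_adj_getVert_of_adj_getVert_add_two hc hodd hmax hconn hAB hA hB (by omega)
        hm'A hmA hm' (hi ▸ ih (by omega))] at hm'
  obtain ⟨r, hr⟩ := hodd
  have h1m : G.Adj (c.getVert 1) m := by
    simpa [hr, show 2 * r + 1 - 2 * r = 1 by omega] using hback r (by omega)
  have hv1 : G.Adj v (c.getVert 1) := by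
    simpa using c.adj_getVert_succ (i := 0) (by omega)
  have hmc : m ∉ c.support := hAB.subset (Or.inl hmA)
  have hP : (cons hv1.symm nil).IsPath := by simp [hv1.ne']
  refine ⟨v, _, hP.isCycle_cons_append_cons not_nil_cons IsPath.nil ?_ hvm h1m.symm, rfl⟩
  intro y hy hyP
  rw [support_nil, List.mem_singleton] at hy
  subst hy
  simp only [support_cons, support_nil, List.mem_cons, List.not_mem_nil, or_false] at hyP
  rcases hyP with rfl | rfl
  exacts [hmc (c.getVert_mem_support 1), hmc c.start_mem_support]

end SimpleGraph

theorem stmt15_general {V : Type*} [Fintype V] (G : SimpleGraph V) (k l : ℕ)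
    (hk : 5 ≤ k) (h3c : ThreeConnected G)
    (hL : oddCycleLengths G = {k, k + 2 * l})
    -- `C` is a non-separating induced odd cycle
    (v : V) (c : G.Walk v v) (hc : c.IsCycle) (hodd : Odd c.length)
    (hind : ∀ x y, x ∈ c.support → y ∈ c.support → G.Adj x y → c.toSubgraph.Adj x y)
    (hconn : (G.induce {x | x ∉ c.support}).Connected)
    -- `H = G - V(C)` is bipartite with bipartition `(A, B)`
    (A B : Set V)
    (hAB : A ∪ B = {x | x ∉ c.support})
    (hA : ∀ a ∈ A, ∀ a' ∈ A, ¬ G.Adj a a')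
    (hB : ∀ b ∈ B, ∀ b' ∈ B, ¬ G.Adj b b')
    -- all neighbors in `H` of vertices of `C` lie in `A`
    (hNA : ∀ u ∈ c.support, ∀ w, G.Adj u w → w ∉ c.support → w ∈ A) :
    c.length = k := by
  have hmem : ∀ {u : V} {w : G.Walk u u}, w.IsCycle → Odd w.length →
      w.length = k ∨ w.length = k + 2 * l := fun {u w} hw hwodd => by
    have : w.length ∈ oddCycleLengths G := ⟨hwodd, u, w, hw, rfl⟩
    rwa [hL] at this
  refine (hmem hc hodd).resolve_right fun hlong => ?_
  have hmax : ∀ (u : V) (w : G.Walk u u), w.IsCycle → Odd w.length → w.length ≤ c.length :=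
    fun u w hw hwodd => by rcases hmem hw hwodd with h | h <;> omega
  obtain ⟨u, w, hw, hw3⟩ := exists_triangle_of_longest_odd_cycle h3c hc hodd hmax hind hconn hAB
    hA hB hNA
  rcases hmem hw (by rw [hw3]; decide) with h | h <;> omega

theorem stmt15 {V : Type*} [Fintype V] (G : SimpleGraph V) (k l : ℕ)
    (hk : 5 ≤ k) (hl : 1 ≤ l)
    (hcrit : IsFourCritical G) (h3c : ThreeConnected G)
    (hL : oddCycleLengths G = {k, k + 2 * l})
    -- every two odd cycles share at least two vertices
    (hint : ∀ (a b : V) (w1 : G.Walk a a) (w2 : G.Walk b b),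
      w1.IsCycle → w2.IsCycle → Odd w1.length → Odd w2.length →
      2 ≤ ({x | x ∈ w1.support ∧ x ∈ w2.support} : Set V).ncard)
    -- `C` is a non-separating induced odd cycle
    (v : V) (c : G.Walk v v) (hc : c.IsCycle) (hodd : Odd c.length)
    (hind : ∀ x y, x ∈ c.support → y ∈ c.support → G.Adj x y → c.toSubgraph.Adj x y)
    (hconn : (G.induce {x | x ∉ c.support}).Connected)
    -- `H = G - V(C)` is bipartite with bipartition `(A, B)`
    (A B : Set V)
    (hAB : A ∪ B = {x | x ∉ c.support}) (hdisj : Disjoint A B)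
    (hA : ∀ a ∈ A, ∀ a' ∈ A, ¬ G.Adj a a')
    (hB : ∀ b ∈ B, ∀ b' ∈ B, ¬ G.Adj b b')
    -- all neighbors in `H` of vertices of `C` lie in `A`
    (hNA : ∀ u ∈ c.support, ∀ w, G.Adj u w → w ∉ c.support → w ∈ A) :
    c.length = k :=
  stmt15_general G k l hk h3c hL v c hc hodd hind hconn A B hAB hA hB hNA
end
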